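/- For the Poisson bracket on polynomials in two variables given by {f,g} = (x²+y²)·(∂ₓf ∂ᵧg − ∂ᵧf ∂ₓg), a polynomial f is a Casimir if and only if f is constant. -/

import Mathlib

/-!
Bracketing with the coordinates gives `{f, y} = (x² + y²) ∂ₓf` and `{f, x} = -(x² + y²) ∂ᵧf`.
Since `ℝ[x,y]` is a domain and `x² + y² ≠ 0`, a Casimir has both partial derivatives zero, and in
characteristic zero that forces it to be constant.
-/

noncomputable section
open MvPolynomial

/-- The Poisson bracket of the quadratic Poisson structure P₃ = (x²+y²) ∂ₓ∧∂ᵧ on ℝ[x,y]. -/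
def pb3 (f g : MvPolynomial (Fin 2) ℝ) : MvPolynomial (Fin 2) ℝ :=
  (X 0 ^ 2 + X 1 ^ 2) * (pderiv 0 f * pderiv 1 g - pderiv 1 f * pderiv 0 g)

namespace MvPolynomial

variable {R σ : Type*} [CommSemiring R]

theorem eq_C_coeff_zero_of_forall_pderiv_eq_zero [IsAddTorsionFree R] {f : MvPolynomial σ R}
    (h : ∀ i, pderiv i f = 0) : f = C (coeff 0 f) := by
  classical
  ext m
  rw [coeff_C]
  split_ifs with hm
  · rw [hm]
  obtain ⟨i, hi⟩ : ∃ i, m i ≠ 0 := by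
    by_contra! hc
    exact hm (Finsupp.ext hc).symm
  have hm_split : m = (m - Finsupp.single i 1) + Finsupp.single i 1 :=
    (tsub_add_cancel_of_le (Finsupp.single_le_iff.mpr (Nat.one_le_iff_ne_zero.mpr hi))).symm
  have hcoeff := coeff_pderiv (i := i) f (m - Finsupp.single i 1)
  rw [h i, coeff_zero, ← hm_split, ← Nat.cast_succ, mul_comm, ← nsmul_eq_mul] at hcoeff
  exact (nsmul_eq_zero_iff_right (Nat.succ_ne_zero _)).mp hcoeff.symm

theorem X_sq_add_X_sq_ne_zero [Nontrivial R] {i j : σ} (hij : i ≠ j) :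
    (X i ^ 2 + X j ^ 2 : MvPolynomial σ R) ≠ 0 := by
  classical
  intro h
  have := congrArg (coeff (Finsupp.single i 2)) h
  simp [coeff_X_pow, Finsupp.single_eq_single_iff, hij.symm] at this

end MvPolynomial

theorem pb3_X_one (f : MvPolynomial (Fin 2) ℝ) :
    pb3 f (X 1) = (X 0 ^ 2 + X 1 ^ 2) * pderiv 0 f := by
  simp [pb3]

theorem pb3_X_zero (f : MvPolynomial (Fin 2) ℝ) :
    pb3 f (X 0) = -((X 0 ^ 2 + X 1 ^ 2) * pderiv 1 f) := by
  simp [pb3]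

theorem pb3_C_left (c : ℝ) (g : MvPolynomial (Fin 2) ℝ) : pb3 (C c) g = 0 := by
  simp [pb3]

/-- f is a Casimir of P₃ = (x²+y²) ∂ₓ∧∂ᵧ iff f is a constant. -/
theorem casimir_P3_iff_const (f : MvPolynomial (Fin 2) ℝ) :
    (∀ g : MvPolynomial (Fin 2) ℝ, pb3 f g = 0) ↔ ∃ c : ℝ, f = C c := by
  have hq : (X 0 ^ 2 + X 1 ^ 2 : MvPolynomial (Fin 2) ℝ) ≠ 0 := X_sq_add_X_sq_ne_zero (by decide)
  constructor
  · intro h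
    refine ⟨coeff 0 f, eq_C_coeff_zero_of_forall_pderiv_eq_zero fun i => ?_⟩
    fin_cases i
    · simpa [pb3_X_one, hq] using h (X 1)
    · simpa [pb3_X_zero, hq] using h (X 0)
  · rintro ⟨c, rfl⟩ g
    exact pb3_C_left c g
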